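/- Let a = (a_0,…,a_ℓ) be a filter of order ν ≥ 1, i.e. Σ_{q=0}^ℓ q^j a_q = 0 for j = 0,…,ν−1. Then the function γ^a(j) = −(1/2) Σ_{q,q'=0}^ℓ a_q a_{q'} |q − q' + j|^{2H}, for 0 < H < 1, satisfies γ^a(j) = O(|j|^{2H−2ν}) as |j| → ∞. -/

import Mathlib

/-!
Write `γ^a(t) = -½ S(t)` with `S(t) = Σ_{q,q'} a_q a_{q'} f(q - q' + t)` and `f(x) = |x|^{2H}`.
Since the moments of `a` of order `< ν` vanish, `S` annihilates every polynomial `f` of degree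
`< 2ν`. For `t ≥ 2(ℓ + 1)` we may therefore replace `f` by its Taylor remainder of order `2ν` on
`[t - ℓ - 1, t + ℓ + 1]`, where `f(x) = x^{2H}` and `|f^{(2ν)}(y)| ≍ y^{2H - 2ν} ≍ t^{2H - 2ν}`.
As `S` is even, the bound at `|j|` gives the bound at `j`.
-/

open Finset

def filterPairSum (s : Finset ℕ) (a : ℕ → ℝ) (f : ℝ → ℝ) (t : ℝ) : ℝ :=
  ∑ q ∈ s, ∑ q' ∈ s, a q * a q' * f ((q : ℝ) - q' + t)

theorem iteratedDerivWithin_rpow_const_Icc {lo hi p y : ℝ} (n : ℕ) (hlo : 0 < lo) (hlt : lo < hi)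
    (hy : y ∈ Set.Icc lo hi) :
    iteratedDerivWithin n (fun x : ℝ => x ^ p) (Set.Icc lo hi) y
      = (descPochhammer ℝ n).eval p * y ^ (p - n) := by
  rw [iteratedDerivWithin_eq_iteratedDeriv (uniqueDiffOn_Icc hlt)
      (Real.contDiffAt_rpow_const_of_ne (hlo.trans_le hy.1).ne') hy,
    iteratedDeriv_eq_iterate, Real.iter_deriv_rpow_const]

theorem rpow_le_two_rpow_abs_mul_rpow {t y : ℝ} (g : ℝ) (ht : 0 < t)
    (hy : y ∈ Set.Icc (t / 2) (2 * t)) : y ^ g ≤ 2 ^ |g| * t ^ g := by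
  have hy0 : 0 < y := by linarith [hy.1]
  rcases le_total 0 g with hg | hg
  · calc y ^ g ≤ (2 * t) ^ g := Real.rpow_le_rpow hy0.le hy.2 hg
      _ = 2 ^ |g| * t ^ g := by rw [abs_of_nonneg hg, Real.mul_rpow zero_le_two ht.le]
  · calc y ^ g ≤ (t / 2) ^ g := Real.rpow_le_rpow_of_nonpos (by positivity) hy.1 hg
      _ = 2 ^ |g| * t ^ g := by
        rw [abs_of_nonpos hg, Real.div_rpow ht.le zero_le_two, Real.rpow_neg zero_le_two,
          div_eq_mul_inv, mul_comm]

section FilterPairSum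

variable {s : Finset ℕ} {a : ℕ → ℝ}

theorem filterPairSum_sub (f g : ℝ → ℝ) (t : ℝ) :
    filterPairSum s a (fun x => f x - g x) t = filterPairSum s a f t - filterPairSum s a g t := by
  simp only [filterPairSum, mul_sub, sum_sub_distrib]

theorem filterPairSum_finset_sum {ι : Type*} (u : Finset ι) (g : ι → ℝ → ℝ) (t : ℝ) :
    filterPairSum s a (fun x => ∑ k ∈ u, g k x) t = ∑ k ∈ u, filterPairSum s a (g k) t := by
  simp only [filterPairSum, mul_sum]
  exact (sum_congr rfl fun _ _ => sum_comm).trans sum_comm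

theorem filterPairSum_mul_const (g : ℝ → ℝ) (c t : ℝ) :
    filterPairSum s a (fun x => g x * c) t = filterPairSum s a g t * c := by
  simp only [filterPairSum, sum_mul, mul_assoc]

theorem filterPairSum_neg (f : ℝ → ℝ) (t : ℝ) :
    filterPairSum s a f (-t) = filterPairSum s a (fun x => f (-x)) t := by
  rw [filterPairSum, sum_comm]
  refine sum_congr rfl fun q _ => sum_congr rfl fun q' _ => ?_
  rw [show (q' : ℝ) - q + -t = -((q : ℝ) - q' + t) by ring, mul_comm (a q')]

theorem filterPairSum_abs_of_even {f : ℝ → ℝ} (hf : Function.Even f) (t : ℝ) :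
    filterPairSum s a f |t| = filterPairSum s a f t := by
  rcases abs_choice t with h | h
  · rw [h]
  · rw [h, filterPairSum_neg, show (fun x => f (-x)) = f from funext hf]

theorem abs_filterPairSum_le {f : ℝ → ℝ} {t B : ℝ}
    (hB : ∀ q ∈ s, ∀ q' ∈ s, |f ((q : ℝ) - q' + t)| ≤ B) :
    |filterPairSum s a f t| ≤ (∑ q ∈ s, |a q|) ^ 2 * B := by
  calc |filterPairSum s a f t| ≤ ∑ q ∈ s, ∑ q' ∈ s, |a q| * |a q'| * B := by
        refine (abs_sum_le_sum_abs _ _).trans (sum_le_sum fun q hq => ?_)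
        refine (abs_sum_le_sum_abs _ _).trans (sum_le_sum fun q' hq' => ?_)
        rw [abs_mul, abs_mul]
        gcongr
        exact hB q hq q' hq'
    _ = (∑ q ∈ s, |a q|) ^ 2 * B := by
        rw [sq, sum_mul_sum, sum_mul]
        simp_rw [sum_mul]

theorem sum_mul_add_pow_eq_zero {ν m : ℕ} (hfilt : ∀ j < ν, ∑ q ∈ s, (q : ℝ) ^ j * a q = 0)
    (hm : m < ν) (c : ℝ) : ∑ q ∈ s, a q * ((q : ℝ) + c) ^ m = 0 := by
  simp_rw [add_pow, mul_sum]
  rw [sum_comm]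
  refine sum_eq_zero fun i hi => ?_
  have hi : i < ν := by have := mem_range.mp hi; omega
  calc ∑ q ∈ s, a q * ((q : ℝ) ^ i * c ^ (m - i) * m.choose i)
      = (∑ q ∈ s, (q : ℝ) ^ i * a q) * (c ^ (m - i) * m.choose i) := by
        rw [sum_mul]; exact sum_congr rfl fun q _ => by ring
    _ = 0 := by rw [hfilt i hi, zero_mul]

/-- Expanding `((q + c) - q')^k` binomially, each term carries a moment of order `< ν`
of either `a q` or `a q'`. -/
theorem filterPairSum_sub_pow_eq_zero {ν k : ℕ}
    (hfilt : ∀ j < ν, ∑ q ∈ s, (q : ℝ) ^ j * a q = 0) (hk : k < 2 * ν) (x₀ t : ℝ) :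
    filterPairSum s a (fun x => (x - x₀) ^ k) t = 0 := by
  calc filterPairSum s a (fun x => (x - x₀) ^ k) t
      = ∑ m ∈ range (k + 1), (-1) ^ (m + k) * k.choose m *
          ((∑ q ∈ s, a q * ((q : ℝ) + (t - x₀)) ^ m) * ∑ q' ∈ s, (q' : ℝ) ^ (k - m) * a q') := by
        simp_rw [filterPairSum, sum_mul_sum, mul_sum]
        rw [sum_comm.trans (sum_congr rfl fun _ _ => sum_comm)]
        refine sum_congr rfl fun q _ => sum_congr rfl fun q' _ => ?_
        rw [show (q : ℝ) - q' + t - x₀ = (q + (t - x₀)) - q' by ring, sub_pow, mul_sum]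
        exact sum_congr rfl fun m _ => by ring
    _ = 0 := by
        refine sum_eq_zero fun m hm => ?_
        rcases lt_or_ge m ν with hmν | hmν
        · rw [sum_mul_add_pow_eq_zero hfilt hmν, zero_mul, mul_zero]
        · rw [hfilt (k - m) (by omega), mul_zero, mul_zero]

theorem filterPairSum_taylorWithinEval_eq_zero {ν n : ℕ}
    (hfilt : ∀ j < ν, ∑ q ∈ s, (q : ℝ) ^ j * a q = 0) (hn : n < 2 * ν) (f : ℝ → ℝ) (S : Set ℝ)
    (x₀ t : ℝ) : filterPairSum s a (taylorWithinEval f n S x₀) t = 0 := by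
  have htaylor : taylorWithinEval f n S x₀ = fun x => ∑ k ∈ range (n + 1),
      (x - x₀) ^ k * ((k.factorial : ℝ)⁻¹ * iteratedDerivWithin k f S x₀) := by
    ext x
    rw [taylor_within_apply]
    exact sum_congr rfl fun k _ => by rw [smul_eq_mul]; ring
  rw [htaylor, filterPairSum_finset_sum]
  refine sum_eq_zero fun k hk => ?_
  rw [filterPairSum_mul_const,
    filterPairSum_sub_pow_eq_zero hfilt (by have := mem_range.mp hk; omega), zero_mul]

theorem abs_filterPairSum_le_of_iteratedDerivWithin_le {ν n : ℕ} {f : ℝ → ℝ} {r t M : ℝ} (hfilt : ∀ j < ν, ∑ q ∈ s, (q : ℝ) ^ j * a q = 0)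
    (hn : n < 2 * ν) (hs : ∀ q ∈ s, (q : ℝ) ≤ r)
    (hf : ContDiffOn ℝ (n + 1) f (Set.Icc (t - r) (t + r)))
    (hM : ∀ y ∈ Set.Icc (t - r) (t + r),
      ‖iteratedDerivWithin (n + 1) f (Set.Icc (t - r) (t + r)) y‖ ≤ M) :
    |filterPairSum s a f t| ≤ (∑ q ∈ s, |a q|) ^ 2 * (M * (2 * r) ^ (n + 1) / n.factorial) := by
  rw [← sub_zero (filterPairSum s a f t),
    ← filterPairSum_taylorWithinEval_eq_zero hfilt hn f (Set.Icc (t - r) (t + r)) (t - r) t,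
    ← filterPairSum_sub]
  refine abs_filterPairSum_le fun q hq q' hq' => ?_
  have hx : (q : ℝ) - q' + t ∈ Set.Icc (t - r) (t + r) := by
    have := hs q hq; have := hs q' hq'
    constructor <;> linarith [q.cast_nonneg (α := ℝ), q'.cast_nonneg (α := ℝ)]
  have hM0 : 0 ≤ M := (norm_nonneg _).trans (hM _ hx)
  refine (taylor_mean_remainder_bound (hx.1.trans hx.2) hf hx hM).trans ?_
  gcongr
  · linarith [hx.1]
  · linarith [hx.2]

theorem abs_filterPairSum_abs_rpow_le {ν n : ℕ} {r t : ℝ} (p : ℝ)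
    (hfilt : ∀ j < ν, ∑ q ∈ s, (q : ℝ) ^ j * a q = 0) (hn : n < 2 * ν)
    (hs : ∀ q ∈ s, (q : ℝ) ≤ r) (hr : 0 < r) (ht : 2 * r ≤ t) :
    |filterPairSum s a (fun x => |x| ^ p) t|
      ≤ (∑ q ∈ s, |a q|) ^ 2 * (|(descPochhammer ℝ (n + 1)).eval p| *
          (2 ^ |p - (n + 1 : ℕ)| * t ^ (p - (n + 1 : ℕ))) * (2 * r) ^ (n + 1) / n.factorial) := by
  have hlo : 0 < t - r := by linarith
  have habs : Set.EqOn (fun x : ℝ => |x| ^ p) (fun x => x ^ p) (Set.Icc (t - r) (t + r)) :=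
    fun x hx => by simp only [abs_of_pos (hlo.trans_le hx.1)]
  refine abs_filterPairSum_le_of_iteratedDerivWithin_le hfilt hn hs
    (fun y hy => ?_) (fun y hy => ?_)
  · exact ((Real.contDiffAt_rpow_const_of_ne (hlo.trans_le hy.1).ne').contDiffWithinAt).congr
      habs (habs hy)
  · rw [iteratedDerivWithin_congr habs hy,
      iteratedDerivWithin_rpow_const_Icc _ hlo (by linarith) hy, norm_mul, Real.norm_eq_abs,
      Real.norm_of_nonneg (Real.rpow_nonneg (hlo.trans_le hy.1).le _)]
    gcongr
    exact rpow_le_two_rpow_abs_mul_rpow _ (by linarith) ⟨by linarith [hy.1], by linarith [hy.2]⟩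

end FilterPairSum

theorem stmt2_general (ℓ ν : ℕ) (hν : 1 ≤ ν) (a : ℕ → ℝ) (H : ℝ)
    (hfilt : ∀ j < ν, ∑ q ∈ Finset.range (ℓ + 1), (q : ℝ) ^ j * a q = 0) :
    ∃ C > (0 : ℝ), ∃ J : ℕ, ∀ j : ℤ, (J : ℝ) ≤ |(j : ℝ)| →
      |(-(1 : ℝ) / 2) * ∑ q ∈ Finset.range (ℓ + 1), ∑ q' ∈ Finset.range (ℓ + 1),
          a q * a q' * |(q : ℝ) - (q' : ℝ) + (j : ℝ)| ^ (2 * H)|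
        ≤ C * |(j : ℝ)| ^ (2 * H - 2 * (ν : ℝ)) := by
  have hs : ∀ q ∈ range (ℓ + 1), (q : ℝ) ≤ ℓ + 1 := fun q hq => by
    exact_mod_cast (mem_range.mp hq).le
  have hn : 2 * ν - 1 + 1 = 2 * ν := by omega
  set γ := filterPairSum (range (ℓ + 1)) a (fun x => |x| ^ (2 * H))
  set C := (∑ q ∈ range (ℓ + 1), |a q|) ^ 2 * |(descPochhammer ℝ (2 * ν)).eval (2 * H)| *
    2 ^ |2 * H - 2 * ν| * (2 * (ℓ + 1)) ^ (2 * ν) / (2 * ν - 1).factorial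
  refine ⟨C + 1, by positivity, 2 * ℓ + 2, fun j hj => ?_⟩
  have hγ : |γ j| ≤ C * |(j : ℝ)| ^ (2 * H - 2 * ν) := by
    have h := abs_filterPairSum_abs_rpow_le (2 * H) hfilt (n := 2 * ν - 1) (by omega) hs
      (by positivity) (t := |(j : ℝ)|) (by push_cast at hj; linarith)
    rw [filterPairSum_abs_of_even (fun x => by rw [abs_neg]), hn] at h
    push_cast at h
    exact h.trans_eq (by ring)
  calc |(-(1 : ℝ) / 2) * γ j| ≤ |γ j| := by
        rw [abs_mul, show |(-(1 : ℝ) / 2)| = 1 / 2 by norm_num]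
        linarith [abs_nonneg (γ j)]
    _ ≤ C * |(j : ℝ)| ^ (2 * H - 2 * ν) := hγ
    _ ≤ (C + 1) * |(j : ℝ)| ^ (2 * H - 2 * ν) := by gcongr; linarith

/-- for a filter `a` of order `ν ≥ 1`, the function
`γ^a(j) = −(1/2) Σ_{q,q'} a_q a_{q'} |q − q' + j|^{2H}` is `O(|j|^{2H−2ν})`
as `|j| → ∞`. -/
theorem stmt2 (ℓ ν : ℕ) (hν : 1 ≤ ν) (a : ℕ → ℝ) (H : ℝ) (hH : 0 < H) (hH1 : H < 1)
    (hfilt : ∀ j < ν, ∑ q ∈ Finset.range (ℓ + 1), (q : ℝ) ^ j * a q = 0)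
    (hord : ∑ q ∈ Finset.range (ℓ + 1), (q : ℝ) ^ ν * a q ≠ 0) :
    ∃ C > (0 : ℝ), ∃ J : ℕ, ∀ j : ℤ, (J : ℝ) ≤ |(j : ℝ)| →
      |(-(1 : ℝ) / 2) * ∑ q ∈ Finset.range (ℓ + 1), ∑ q' ∈ Finset.range (ℓ + 1),
          a q * a q' * |(q : ℝ) - (q' : ℝ) + (j : ℝ)| ^ (2 * H)|
        ≤ C * |(j : ℝ)| ^ (2 * H - 2 * (ν : ℝ)) :=
  stmt2_general ℓ ν hν a H hfilt
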